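/- In the cut-vertex setup, let μ be a symmetric weight on F. If Ḡ and H̄ both satisfy the bunkbed conjecture, then for all x ∈ V(Ḡ) and y ∈ V(H̄), P_{F,μ}(x⁻ ∼_F y⁺) ≤ P_{F,μ}(x⁻ ∼_F y⁻). -/

import Mathlib

open Classical

noncomputable def edgeFin {V : Type*} [Fintype V] (G : SimpleGraph V) : Finset (Sym2 V) :=
  G.edgeSet.toFinset

noncomputable def percWeight {V : Type*} [Fintype V] (G : SimpleGraph V)
    (μ : Sym2 V → ℝ) (K : Finset (Sym2 V)) : ℝ :=
  (∏ e ∈ K, μ e) * ∏ e ∈ edgeFin G \ K, (1 - μ e)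

noncomputable def percProb {V : Type*} [Fintype V] (G : SimpleGraph V)
    (μ : Sym2 V → ℝ) (A : Finset (Sym2 V) → Prop) : ℝ :=
  ∑ K ∈ (edgeFin G).powerset, if A K then percWeight G μ K else 0

def ConnIn {V : Type*} (K : Finset (Sym2 V)) (x y : V) : Prop :=
  (SimpleGraph.fromEdgeSet (↑K : Set (Sym2 V))).Reachable x y

def IsWeight {V : Type*} (G : SimpleGraph V) (μ : Sym2 V → ℝ) : Prop :=
  ∀ e ∈ G.edgeSet, 0 ≤ μ e ∧ μ e ≤ 1

def BB {V : Type*} (G : SimpleGraph V) : SimpleGraph (V × Bool) :=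
  G.boxProd ⊤

def IsSymWeight {V : Type*} (G : SimpleGraph V) (μ : Sym2 (V × Bool) → ℝ) : Prop :=
  ∀ x y : V, G.Adj x y →
    μ s((x, false), (y, false)) = μ s((x, true), (y, true))

def SatisfiesBunkbed {V : Type*} [Fintype V] (G : SimpleGraph V) : Prop :=
  ∀ μ : Sym2 (V × Bool) → ℝ, IsWeight (BB G) μ → IsSymWeight G μ →
    ∀ x y : V,
      percProb (BB G) μ (fun K => ConnIn K (x, false) (y, true)) ≤
        percProb (BB G) μ (fun K => ConnIn K (x, false) (y, false))

def restrict {V : Type*} (G : SimpleGraph V) (S : Set V) : SimpleGraph V where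
  Adj x y := G.Adj x y ∧ x ∈ S ∧ y ∈ S
  symm := ⟨fun x y h => ⟨h.1.symm, h.2.2, h.2.1⟩⟩
  loopless := ⟨fun x h => G.irrefl h.1⟩

def IsCutVertex {V : Type*} (G : SimpleGraph V) (v : V) : Prop :=
  ∃ x y : ({u | u ≠ v} : Set V),
    G.Reachable x.1 y.1 ∧ ¬ (G.induce {u | u ≠ v}).Reachable x y

/-- The copy of `BB (F̄[S])` sitting inside `BB F̄` (as a spanning subgraph on `V × Bool`):
its edges are the two horizontal copies of the edges of `F̄` inside `S`, together with the
vertical edges at the vertices of `S`. -/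
def bbSide {V : Type*} (Fbar : SimpleGraph V) (S : Set V) : SimpleGraph (V × Bool) :=
  restrict (BB Fbar) {p : V × Bool | p.1 ∈ S}

/-- `H₀`: the graph `H = BB (F̄[T])` with the vertical edge `v⁻v⁺` deleted. -/
def bbSideDel {V : Type*} (Fbar : SimpleGraph V) (T : Set V) (v : V) :
    SimpleGraph (V × Bool) :=
  (bbSide Fbar T).deleteEdges {s((v, false), (v, true))}

/-! ### Auxiliary lemmas -/

section Aux
open SimpleGraph Finset

lemma finsetMapSdiff {α β : Type*} [DecidableEq α] [DecidableEq β] (f : α ↪ β)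
    (s t : Finset α) : (s \ t).map f = s.map f \ t.map f := by
  ext e
  simp only [mem_map, mem_sdiff]
  constructor
  · rintro ⟨a, ⟨has, hat⟩, rfl⟩
    exact ⟨⟨a, has, rfl⟩, fun ⟨b, hbt, hbe⟩ => hat (f.injective hbe ▸ hbt)⟩
  · rintro ⟨⟨a, has, rfl⟩, hne⟩
    exact ⟨a, ⟨has, fun hat => hne ⟨a, hat, rfl⟩⟩, rfl⟩

lemma connIn_comm {V : Type*} {K : Finset (Sym2 V)} {p q : V} :
    ConnIn K p q ↔ ConnIn K q p :=
  ⟨fun h => h.symm, fun h => h.symm⟩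

lemma connIn_mono {V : Type*} {K K' : Finset (Sym2 V)} (h : K ⊆ K') {p q : V}
    (hr : ConnIn K p q) : ConnIn K' p q :=
  hr.mono (fromEdgeSet_mono (by exact_mod_cast h))

lemma connIn_map {α β : Type*} (f : α ↪ β) (K : Finset (Sym2 α)) (p q : α) :
    ConnIn (K.map f.sym2Map) (f p) (f q) ↔ ConnIn K p q := by
  constructor
  · intro h
    rw [ConnIn, reachable_iff_reflTransGen] at h
    have key : ∀ z, Relation.ReflTransGen
        (fromEdgeSet (↑(K.map f.sym2Map) : Set (Sym2 β))).Adj z (f q) →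
        ∃ c, z = f c ∧ ConnIn K c q := by
      intro z hz
      induction hz using Relation.ReflTransGen.head_induction_on with
      | refl => exact ⟨q, rfl, Reachable.refl q⟩
      | @head a c hadj hrest ih =>
        obtain ⟨d, hcd, hc⟩ := ih
        subst hcd
        rw [fromEdgeSet_adj] at hadj
        obtain ⟨he, hne⟩ := hadj
        rw [Finset.mem_coe, Finset.mem_map] at he
        obtain ⟨e, heK, hemap⟩ := he
        induction e using Sym2.ind with
        | _ u w =>
        have h2 : s(f u, f w) = s(a, f d) := hemap
        rw [Sym2.eq_iff] at h2
        rcases h2 with ⟨hu, hw⟩ | ⟨hu, hw⟩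
        · have hwd : w = d := f.injective hw
          subst hwd
          refine ⟨u, hu.symm, Reachable.trans (Adj.reachable ?_) hc⟩
          rw [fromEdgeSet_adj]
          exact ⟨heK, fun huw => hne (by rw [← hu, huw, hw])⟩
        · have hud : u = d := f.injective hu
          subst hud
          refine ⟨w, hw.symm, Reachable.trans (Adj.reachable ?_) hc⟩
          rw [fromEdgeSet_adj]
          refine ⟨by rwa [Sym2.eq_swap], fun hwu => hne (by rw [← hw, hwu, hu])⟩
    obtain ⟨c, hc, hreach⟩ := key _ h
    rwa [f.injective hc]
  · intro h
    rw [ConnIn, reachable_iff_reflTransGen] at h ⊢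
    refine Relation.ReflTransGen.lift f (fun a b hab => ?_) _ _ h
    show (fromEdgeSet _).Adj (f a) (f b)
    rw [fromEdgeSet_adj] at hab ⊢
    refine ⟨?_, fun hfe => hab.2 (f.injective hfe)⟩
    rw [Finset.mem_coe, Finset.mem_map]
    exact ⟨s(a, b), hab.1, rfl⟩

lemma connIn_endpoint {α : Type*} {A : Finset (Sym2 α)} {P : α → Prop}
    (hA : ∀ p q : α, s(p, q) ∈ A → P p ∧ P q) {p q : α}
    (h : ConnIn A p q) : p = q ∨ P p := by
  rw [ConnIn, reachable_iff_reflTransGen] at h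
  rcases Relation.ReflTransGen.cases_head h with rfl | ⟨c, hadj, _⟩
  · exact Or.inl rfl
  · rw [fromEdgeSet_adj] at hadj
    exact Or.inr (hA p c hadj.1).1

lemma conn_decomp {V : Type*} [DecidableEq (Sym2 (V × Bool))] {S T : Set V} {v : V} (hST : S ∩ T = {v})
    (A B : Finset (Sym2 (V × Bool)))
    (hA : ∀ p q : V × Bool, s(p, q) ∈ A → p.1 ∈ S ∧ q.1 ∈ S)
    (hB : ∀ p q : V × Bool, s(p, q) ∈ B → p.1 ∈ T ∧ q.1 ∈ T)
    {x y : V} (hx : x ∈ S) (hy : y ∈ T) (ε : Bool) :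
    ConnIn (A ∪ B) (x, false) (y, ε) ↔
      ∃ a : Bool, ConnIn A (x, false) (v, a) ∧ ConnIn B (v, a) (y, ε) := by
  have memv : ∀ u : V, u ∈ S → u ∈ T → u = v := by
    intro u h1 h2
    have : u ∈ S ∩ T := ⟨h1, h2⟩
    rwa [hST, Set.mem_singleton_iff] at this
  constructor
  · -- hard direction
    set J : Bool → Bool → Prop :=
      fun a b => ConnIn A (v, a) (v, b) ∨ ConnIn B (v, a) (v, b) with hJ
    have Jrefl : ∀ a, J a a := fun a => Or.inl (SimpleGraph.Reachable.refl _)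
    have Jtrans : ∀ {a b c}, J a b → J b c → J a c := by
      intro a b c hab hbc
      by_cases h1 : a = b
      · subst h1; exact hbc
      by_cases h2 : b = c
      · subst h2; exact hab
      have hac : a = c := by
        have : ∀ a b c : Bool, a ≠ b → b ≠ c → a = c := by decide
        exact this a b c h1 h2
      subst hac; exact Jrefl a
    set Good : Bool → Prop := fun a => ∃ b, J a b ∧ ConnIn B (v, b) (y, ε) with hGood
    have GoodJ : ∀ {a b}, J a b → Good b → Good a := by
      rintro a b hab ⟨c, hbc, hw⟩
      exact ⟨c, Jtrans hab hbc, hw⟩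
    set Q : V × Bool → Prop := fun p =>
      (p.1 ∈ S ∧ ∃ a, ConnIn A p (v, a) ∧ Good a) ∨
      (p.1 ∈ T ∧ (ConnIn B p (y, ε) ∨ ∃ a, ConnIn B p (v, a) ∧ Good a)) with hQ
    intro h
    have closure : ∀ p q : V × Bool,
        (SimpleGraph.fromEdgeSet (↑(A ∪ B) : Set (Sym2 (V × Bool)))).Adj p q →
        Q q → Q p := by
      intro p q hadj hq
      rw [fromEdgeSet_adj, Finset.mem_coe, Finset.mem_union] at hadj
      obtain ⟨hmem | hmem, hne⟩ := hadj
      · -- edge in A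
        obtain ⟨hpS, hqS⟩ := hA p q hmem
        have hpq : ConnIn A p q :=
          SimpleGraph.Adj.reachable (by rw [fromEdgeSet_adj]; exact ⟨hmem, hne⟩)
        rcases hq with ⟨_, a, hqa, hgood⟩ | ⟨hqT, hrest⟩
        · exact Or.inl ⟨hpS, a, hpq.trans hqa, hgood⟩
        · have hq1 : q.1 = v := memv _ hqS hqT
          have hqv : q = (v, q.2) := Prod.ext hq1 rfl
          rcases hrest with hdir | ⟨a, hqa, hgood⟩
          · exact Or.inl ⟨hpS, q.2, hqv ▸ hpq, ⟨q.2, Jrefl _, hqv ▸ hdir⟩⟩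
          · exact Or.inl ⟨hpS, q.2, hqv ▸ hpq,
              GoodJ (Or.inr (hqv ▸ hqa)) hgood⟩
      · -- edge in B
        obtain ⟨hpT, hqT⟩ := hB p q hmem
        have hpq : ConnIn B p q :=
          SimpleGraph.Adj.reachable (by rw [fromEdgeSet_adj]; exact ⟨hmem, hne⟩)
        rcases hq with ⟨hqS, a, hqa, hgood⟩ | ⟨_, hrest⟩
        · have hq1 : q.1 = v := memv _ hqS hqT
          have hqv : q = (v, q.2) := Prod.ext hq1 rfl
          exact Or.inr ⟨hpT, Or.inr ⟨q.2, hqv ▸ hpq,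
            GoodJ (Or.inl (hqv ▸ hqa)) hgood⟩⟩
        · rcases hrest with hdir | ⟨a, hqa, hgood⟩
          · exact Or.inr ⟨hpT, Or.inl (hpq.trans hdir)⟩
          · exact Or.inr ⟨hpT, Or.inr ⟨a, hpq.trans hqa, hgood⟩⟩
    have hQgen : ∀ z, Relation.ReflTransGen
        (SimpleGraph.fromEdgeSet (↑(A ∪ B) : Set (Sym2 (V × Bool)))).Adj z (y, ε) →
        Q z := by
      intro z hz
      induction hz using Relation.ReflTransGen.head_induction_on with
      | refl => exact Or.inr ⟨hy, Or.inl (SimpleGraph.Reachable.refl _)⟩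
      | @head a c hadj hrest ih => exact closure a c hadj ih
    have hQx : Q (x, false) := by
      rw [ConnIn, reachable_iff_reflTransGen] at h
      exact hQgen _ h
    rcases hQx with ⟨_, a, hxa, b, hJab, hW⟩ | ⟨hxT, hrest⟩
    · rcases hJab with hRA | hRB
      · exact ⟨b, hxa.trans hRA, hW⟩
      · exact ⟨a, hxa, hRB.trans hW⟩
    · have hxv : x = v := memv x hx hxT
      subst hxv
      rcases hrest with hdir | ⟨a, hva, b, hJab, hW⟩
      · exact ⟨false, SimpleGraph.Reachable.refl _, hdir⟩
      · rcases Jtrans (Or.inr hva : J false a) hJab with hRA | hRB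
        · exact ⟨b, hRA, hW⟩
        · exact ⟨false, SimpleGraph.Reachable.refl _, hRB.trans hW⟩
  · rintro ⟨a, h1, h2⟩
    exact (connIn_mono Finset.subset_union_left h1).trans
      (connIn_mono Finset.subset_union_right h2)

lemma percWeight_eq {V : Type*} [Fintype V] [DecidableEq (Sym2 V)] (F : SimpleGraph V)
    (μ : Sym2 V → ℝ) (K : Finset (Sym2 V)) :
    percWeight F μ K = (∏ e ∈ K, μ e) * ∏ e ∈ edgeFin F \ K, (1 - μ e) := by
  unfold percWeight
  congr 1
  congr 1
  ext e
  simp [Finset.mem_sdiff]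

lemma percProb_split {V : Type*} [Fintype V] [DecidableEq (Sym2 V)] (F : SimpleGraph V) (μ : Sym2 V → ℝ)
    (EG EH : Finset (Sym2 V)) (hdisj : Disjoint EG EH) (hunion : edgeFin F = EG ∪ EH)
    (Pr : Finset (Sym2 V) → Prop) :
    percProb F μ Pr = ∑ A ∈ EG.powerset, ∑ B ∈ EH.powerset,
      ((∏ e ∈ A, μ e) * ∏ e ∈ EG \ A, (1 - μ e)) *
       ((∏ e ∈ B, μ e) * ∏ e ∈ EH \ B, (1 - μ e)) *
        (if Pr (A ∪ B) then 1 else 0) := by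
  have hd : ∀ e, e ∈ EG → e ∈ EH → False := fun e h1 h2 =>
    Finset.disjoint_left.mp hdisj h1 h2
  rw [percProb, ← Finset.sum_product' (s := EG.powerset) (t := EH.powerset)]
  refine Finset.sum_nbij' (i := fun K => (K ∩ EG, K ∩ EH)) (j := fun P => P.1 ∪ P.2)
    ?_ ?_ ?_ ?_ ?_
  · intro K _
    simp only [Finset.mem_product, Finset.mem_powerset]
    exact ⟨Finset.inter_subset_right, Finset.inter_subset_right⟩
  · intro P hP
    simp only [Finset.mem_product, Finset.mem_powerset] at hP ⊢
    rw [hunion]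
    exact Finset.union_subset_union hP.1 hP.2
  · intro K hK
    simp only [Finset.mem_powerset, hunion] at hK
    show K ∩ EG ∪ K ∩ EH = K
    rw [← Finset.inter_union_distrib_left]
    exact Finset.inter_eq_left.mpr hK
  · rintro ⟨P1, P2⟩ hP
    simp only [Finset.mem_product, Finset.mem_powerset] at hP
    obtain ⟨h1, h2⟩ := hP
    have e1 : (P1 ∪ P2) ∩ EG = P1 := by
      ext e
      simp only [Finset.mem_inter, Finset.mem_union]
      constructor
      · rintro ⟨hu | hu, hg⟩
        · exact hu
        · exact absurd (hd e hg (h2 hu)) not_false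
      · intro h; exact ⟨Or.inl h, h1 h⟩
    have e2 : (P1 ∪ P2) ∩ EH = P2 := by
      ext e
      simp only [Finset.mem_inter, Finset.mem_union]
      constructor
      · rintro ⟨hu | hu, hg⟩
        · exact absurd (hd e (h1 hu) hg) not_false
        · exact hu
      · intro h; exact ⟨Or.inr h, h2 h⟩
    simp only [Prod.mk.injEq]
    exact ⟨e1, e2⟩
  · intro K hK
    simp only [Finset.mem_powerset, hunion] at hK
    show (if Pr K then percWeight F μ K else 0) =
      ((∏ e ∈ K ∩ EG, μ e) * ∏ e ∈ EG \ (K ∩ EG), (1 - μ e)) *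
       ((∏ e ∈ K ∩ EH, μ e) * ∏ e ∈ EH \ (K ∩ EH), (1 - μ e)) *
        (if Pr ((K ∩ EG) ∪ (K ∩ EH)) then 1 else 0)
    set A := K ∩ EG with hA
    set B := K ∩ EH with hB
    have hKdecomp : A ∪ B = K := by
      rw [hA, hB, ← Finset.inter_union_distrib_left]
      exact Finset.inter_eq_left.mpr hK
    rw [hKdecomp]
    have hAB : Disjoint A B :=
      hdisj.mono Finset.inter_subset_right Finset.inter_subset_right
    have hKw : percWeight F μ K =
        ((∏ e ∈ A, μ e) * ∏ e ∈ EG \ A, (1 - μ e)) *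
        ((∏ e ∈ B, μ e) * ∏ e ∈ EH \ B, (1 - μ e)) := by
      rw [percWeight_eq, ← hKdecomp, Finset.prod_union hAB]
      have hsd : edgeFin F \ (A ∪ B) = (EG \ A) ∪ (EH \ B) := by
        rw [hunion]
        ext e
        simp only [Finset.mem_sdiff, Finset.mem_union, Finset.mem_inter, hA, hB]
        constructor
        · rintro ⟨hg | hh, hn⟩
          · exact Or.inl ⟨hg, fun ⟨hk, _⟩ => hn (Or.inl ⟨hk, hg⟩)⟩
          · exact Or.inr ⟨hh, fun ⟨hk, _⟩ => hn (Or.inr ⟨hk, hh⟩)⟩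
        · rintro (⟨hg, hn⟩ | ⟨hh, hn⟩)
          · refine ⟨Or.inl hg, ?_⟩
            rintro (⟨hk, _⟩ | ⟨hk, hh⟩)
            · exact hn ⟨hk, hg⟩
            · exact hd e hg hh
          · refine ⟨Or.inr hh, ?_⟩
            rintro (⟨hk, hg⟩ | ⟨hk, _⟩)
            · exact hd e hg hh
            · exact hn ⟨hk, hh⟩
      have hsdisj : Disjoint (EG \ A) (EH \ B) :=
        hdisj.mono (Finset.sdiff_subset) (Finset.sdiff_subset)
      rw [hsd, Finset.prod_union hsdisj]
      ring
    by_cases hPr : Pr K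
    · rw [if_pos hPr, if_pos hPr, hKw]
      ring
    · rw [if_neg hPr, if_neg hPr]
      ring

lemma percProb_transfer {α β : Type*} [Fintype α] [Fintype β] [DecidableEq (Sym2 α)] [DecidableEq (Sym2 β)] (G' : SimpleGraph α)
    (f : α ↪ β) (μ : Sym2 β → ℝ) (E : Finset (Sym2 β))
    (hE : (edgeFin G').map f.sym2Map = E)
    (Pr : Finset (Sym2 α) → Prop) (Qr : Finset (Sym2 β) → Prop)
    (hPQ : ∀ A ⊆ edgeFin G', (Pr A ↔ Qr (A.map f.sym2Map))) :
    percProb G' (fun e => μ (f.sym2Map e)) Pr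
      = ∑ A ∈ E.powerset,
          ((∏ e ∈ A, μ e) * ∏ e ∈ E \ A, (1 - μ e)) * (if Qr A then 1 else 0) := by
  rw [percProb]
  refine Finset.sum_nbij' (i := fun A => A.map f.sym2Map)
    (j := fun B => B.preimage f.sym2Map f.sym2Map.injective.injOn) ?_ ?_ ?_ ?_ ?_
  · intro A hA
    rw [Finset.mem_powerset] at hA ⊢
    rw [← hE]
    exact Finset.map_subset_map.mpr hA
  · intro B hB
    rw [Finset.mem_powerset] at hB ⊢
    intro e he
    rw [Finset.mem_preimage] at he
    have : f.sym2Map e ∈ (edgeFin G').map f.sym2Map := hE ▸ hB he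
    rw [Finset.mem_map] at this
    obtain ⟨e', he', heq⟩ := this
    rwa [← f.sym2Map.injective heq]
  · intro A _
    exact Finset.preimage_map f.sym2Map A
  · intro B hB
    rw [Finset.mem_powerset] at hB
    ext e
    rw [Finset.mem_map]
    constructor
    · rintro ⟨e', he', rfl⟩
      rwa [Finset.mem_preimage] at he'
    · intro he
      have : e ∈ (edgeFin G').map f.sym2Map := hE ▸ hB he
      rw [Finset.mem_map] at this
      obtain ⟨e', _, rfl⟩ := this
      exact ⟨e', Finset.mem_preimage.mpr he, rfl⟩
  · intro A hA
    rw [Finset.mem_powerset] at hA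
    have hw : percWeight G' (fun e => μ (f.sym2Map e)) A =
        (∏ e ∈ A.map f.sym2Map, μ e) * ∏ e ∈ E \ A.map f.sym2Map, (1 - μ e) := by
      rw [percWeight_eq, ← hE, ← finsetMapSdiff, Finset.prod_map, Finset.prod_map]
    by_cases hPr : Pr A
    · rw [if_pos hPr, if_pos ((hPQ A hA).mp hPr), hw]; ring
    · rw [if_neg hPr, if_neg (fun h => hPr ((hPQ A hA).mpr h))]; ring

end Aux

/-! ### Graph structure lemmas -/

section Structure
open SimpleGraph Finset

variable {V : Type*}

lemma bb_adj (G : SimpleGraph V) (p q : V × Bool) :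
    (BB G).Adj p q ↔ (G.Adj p.1 q.1 ∧ p.2 = q.2) ∨ (p.1 = q.1 ∧ p.2 ≠ q.2) := by
  rw [BB, SimpleGraph.boxProd_adj, SimpleGraph.top_adj]
  tauto

lemma bbSide_adj (Fbar : SimpleGraph V) (S : Set V) (p q : V × Bool) :
    (bbSide Fbar S).Adj p q ↔
      ((Fbar.Adj p.1 q.1 ∧ p.2 = q.2) ∨ (p.1 = q.1 ∧ p.2 ≠ q.2)) ∧ p.1 ∈ S ∧ q.1 ∈ S := by
  constructor
  · rintro ⟨h1, h2, h3⟩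
    exact ⟨(bb_adj _ _ _).mp h1, h2, h3⟩
  · rintro ⟨h1, h2, h3⟩
    exact ⟨(bb_adj _ _ _).mpr h1, h2, h3⟩

lemma bbSideDel_adj (Fbar : SimpleGraph V) (T : Set V) (v : V) (p q : V × Bool) :
    (bbSideDel Fbar T v).Adj p q ↔
      (bbSide Fbar T).Adj p q ∧ s(p, q) ≠ s((v, false), (v, true)) := by
  rw [bbSideDel, SimpleGraph.deleteEdges_adj, Set.mem_singleton_iff]

lemma mem_edgeFin [Fintype V] (G : SimpleGraph V) (p q : V) :
    s(p, q) ∈ edgeFin G ↔ G.Adj p q := by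
  rw [edgeFin, Set.mem_toFinset, SimpleGraph.mem_edgeSet]

lemma edge_partition [Fintype V] [DecidableEq (Sym2 (V × Bool))] (Fbar : SimpleGraph V) (v : V) (S T : Set V)
    (hST : S ∩ T = {v}) (hUnion : S ∪ T = Set.univ)
    (hSep : ∀ x ∈ S, ∀ y ∈ T, Fbar.Adj x y → x = v ∨ y = v) :
    edgeFin (BB Fbar) = edgeFin (bbSide Fbar S) ∪ edgeFin (bbSideDel Fbar T v) ∧
    Disjoint (edgeFin (bbSide Fbar S)) (edgeFin (bbSideDel Fbar T v)) := by
  have hv : v ∈ S ∩ T := by rw [hST]; rfl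
  have hvS := hv.1
  have hvT := hv.2
  have memvST : ∀ u : V, u ∈ S → u ∈ T → u = v := by
    intro u h1 h2
    have : u ∈ S ∩ T := ⟨h1, h2⟩
    rwa [hST, Set.mem_singleton_iff] at this
  have hcov : ∀ u : V, u ∈ S ∨ u ∈ T := by
    intro u
    have : u ∈ S ∪ T := by rw [hUnion]; trivial
    exact this
  constructor
  · ext e
    induction e using Sym2.ind with
    | _ p q =>
    rw [Finset.mem_union, mem_edgeFin, mem_edgeFin, mem_edgeFin, bb_adj, bbSideDel_adj,
      bbSide_adj, bbSide_adj]
    constructor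
    · intro hadj0
      have hTcase : p.1 ∉ S → p.1 ∈ T → q.1 ∈ T →
          (((Fbar.Adj p.1 q.1 ∧ p.2 = q.2) ∨ (p.1 = q.1 ∧ p.2 ≠ q.2)) ∧ p.1 ∈ S ∧ q.1 ∈ S) ∨
          ((((Fbar.Adj p.1 q.1 ∧ p.2 = q.2) ∨ (p.1 = q.1 ∧ p.2 ≠ q.2)) ∧ p.1 ∈ T ∧ q.1 ∈ T) ∧
            s(p, q) ≠ s((v, false), (v, true))) := by
        intro hpS' hpT hqT
        rcases hadj0 with ⟨hadj, h2⟩ | ⟨h1, hne⟩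
        · refine Or.inr ⟨⟨Or.inl ⟨hadj, h2⟩, hpT, hqT⟩, ?_⟩
          intro hveq
          rw [Sym2.eq_iff] at hveq
          rcases hveq with ⟨hp, hq⟩ | ⟨hp, hq⟩ <;>
          · apply hadj.ne
            rw [congrArg Prod.fst hp, congrArg Prod.fst hq]
        · -- vertical at u ∈ T; must have u ≠ v handled by caller; here need ≠ vedge
          -- only called when p.1 ∉ S
          exact Or.inr ⟨⟨Or.inr ⟨h1, hne⟩, hpT, hqT⟩, by
            intro hveq
            rw [Sym2.eq_iff] at hveq
            rcases hveq with ⟨hp, hq⟩ | ⟨hp, hq⟩ <;>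
            · apply hpS'
              rw [hp]
              exact hvS⟩
      by_cases hpS : p.1 ∈ S
      · by_cases hqS : q.1 ∈ S
        · exact Or.inl ⟨hadj0, hpS, hqS⟩
        · -- q.1 ∈ T
          have hqT : q.1 ∈ T := (hcov q.1).resolve_left hqS
          rcases hadj0 with ⟨hadj, h2⟩ | ⟨h1, hne⟩
          · have hpv : p.1 = v := by
              rcases hSep p.1 hpS q.1 hqT hadj with h | h
              · exact h
              · exact absurd (h ▸ hvS) hqS
            have hpT : p.1 ∈ T := hpv ▸ hvT
            refine Or.inr ⟨⟨Or.inl ⟨hadj, h2⟩, hpT, hqT⟩, ?_⟩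
            intro hveq
            rw [Sym2.eq_iff] at hveq
            rcases hveq with ⟨hp, hq⟩ | ⟨hp, hq⟩ <;>
            · apply hadj.ne
              rw [congrArg Prod.fst hp, congrArg Prod.fst hq]
          · exact absurd (h1 ▸ hpS) hqS
      · have hpT : p.1 ∈ T := (hcov p.1).resolve_left hpS
        rcases hadj0 with ⟨hadj, h2⟩ | ⟨h1, hne⟩
        · by_cases hqS : q.1 ∈ S
          · have hqv : q.1 = v := by
              rcases hSep q.1 hqS p.1 hpT hadj.symm with h | h
              · exact h
              · exact absurd (h ▸ hvS) hpS
            have hqT : q.1 ∈ T := hqv ▸ hvT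
            exact hTcase hpS hpT hqT
          · exact hTcase hpS hpT ((hcov q.1).resolve_left hqS)
        · have hqT : q.1 ∈ T := h1 ▸ hpT
          exact hTcase hpS hpT hqT
    · rintro (⟨hadj, _, _⟩ | ⟨⟨hadj, _, _⟩, _⟩) <;> exact hadj
  · rw [Finset.disjoint_left]
    intro e heS heH
    induction e using Sym2.ind with
    | _ p q =>
    rw [mem_edgeFin, bbSide_adj] at heS
    rw [mem_edgeFin, bbSideDel_adj, bbSide_adj] at heH
    obtain ⟨hadj, hpS, hqS⟩ := heS
    obtain ⟨⟨_, hpT, hqT⟩, hne⟩ := heH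
    have hp : p.1 = v := memvST _ hpS hpT
    have hq : q.1 = v := memvST _ hqS hqT
    rcases hadj with ⟨ha, _⟩ | ⟨_, hb⟩
    · exact ha.ne (hp.trans hq.symm)
    · apply hne
      have hp' : p = (v, p.2) := Prod.ext hp rfl
      have hq' : q = (v, q.2) := Prod.ext hq rfl
      rw [hp', hq']
      have hbools : (p.2 = false ∧ q.2 = true) ∨ (p.2 = true ∧ q.2 = false) := by
        have hd : ∀ a b : Bool, a ≠ b → (a = false ∧ b = true) ∨ (a = true ∧ b = false) := by
          decide
        exact hd _ _ hb
      rcases hbools with ⟨h1, h2⟩ | ⟨h1, h2⟩ <;> rw [h1, h2]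
      exact Sym2.eq_swap
end Structure

/-! ### Side embeddings and flip -/

section Emb
open SimpleGraph Finset

variable {V : Type*}

lemma bool_not_inj : ∀ i j : Bool, (!i) = (!j) → i = j := by decide

def sideEmb (S : Set V) : (↥S × Bool) ↪ (V × Bool) :=
  ⟨fun p => (p.1.1, p.2), by
    rintro ⟨a, i⟩ ⟨b, j⟩ h
    simp only [Prod.mk.injEq] at h
    exact Prod.ext (Subtype.ext h.1) h.2⟩

lemma sideEmb_apply {S : Set V} (p : ↥S × Bool) : sideEmb S p = (p.1.1, p.2) := rfl

lemma bbInduce_adj (Fbar : SimpleGraph V) (S : Set V) (p q : ↥S × Bool) :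
    (BB (Fbar.induce S)).Adj p q ↔ (bbSide Fbar S).Adj (sideEmb S p) (sideEmb S q) := by
  rw [bb_adj, bbSide_adj]
  constructor
  · rintro (⟨h1, h2⟩ | ⟨h1, h2⟩)
    · exact ⟨Or.inl ⟨h1, h2⟩, p.1.2, q.1.2⟩
    · exact ⟨Or.inr ⟨congrArg Subtype.val h1, h2⟩, p.1.2, q.1.2⟩
  · rintro ⟨(⟨h1, h2⟩ | ⟨h1, h2⟩), _, _⟩
    · exact Or.inl ⟨h1, h2⟩
    · exact Or.inr ⟨Subtype.ext h1, h2⟩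

lemma edgeFin_corr [Fintype V] (Fbar : SimpleGraph V) (S : Set V) :
    (edgeFin (BB (Fbar.induce S))).map (sideEmb S).sym2Map = edgeFin (bbSide Fbar S) := by
  ext e
  constructor
  · rw [Finset.mem_map]
    rintro ⟨e', he', rfl⟩
    induction e' using Sym2.ind with
    | _ p q =>
    rw [mem_edgeFin] at he'
    show s(sideEmb S p, sideEmb S q) ∈ _
    rw [mem_edgeFin]
    exact (bbInduce_adj Fbar S p q).mp he'
  · intro he
    induction e using Sym2.ind with
    | _ p q =>
    have he' := he
    rw [mem_edgeFin, bbSide_adj] at he'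
    obtain ⟨hadj, hpS, hqS⟩ := he'
    rw [Finset.mem_map]
    refine ⟨s((⟨p.1, hpS⟩, p.2), (⟨q.1, hqS⟩, q.2)), ?_, rfl⟩
    rw [mem_edgeFin, bbInduce_adj]
    exact (mem_edgeFin _ _ _).mp he

def flipEmb : (V × Bool) ↪ (V × Bool) :=
  ⟨fun p => (p.1, !p.2), by
    rintro ⟨a, i⟩ ⟨b, j⟩ h
    simp only [Prod.mk.injEq] at h
    exact Prod.ext h.1 (bool_not_inj i j h.2)⟩

lemma flipEmb_apply (p : V × Bool) : flipEmb p = (p.1, !p.2) := rfl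

lemma flip_invol (e : Sym2 (V × Bool)) :
    (flipEmb (V := V)).sym2Map ((flipEmb (V := V)).sym2Map e) = e := by
  induction e using Sym2.ind with
  | _ p q =>
  show s(flipEmb (flipEmb p), flipEmb (flipEmb q)) = s(p, q)
  show s((p.1, !!p.2), (q.1, !!q.2)) = s(p, q)
  rw [Bool.not_not, Bool.not_not]

lemma flip_vedge (v : V) :
    (flipEmb (V := V)).sym2Map s((v, false), (v, true)) = s((v, false), (v, true)) := by
  show s((v, true), (v, false)) = s((v, false), (v, true))
  exact Sym2.eq_swap

lemma flip_mem_EH [Fintype V] (Fbar : SimpleGraph V) (T : Set V) (v : V)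
    {e : Sym2 (V × Bool)} (he : e ∈ edgeFin (bbSideDel Fbar T v)) :
    (flipEmb (V := V)).sym2Map e ∈ edgeFin (bbSideDel Fbar T v) := by
  induction e using Sym2.ind with
  | _ p q =>
  rw [mem_edgeFin, bbSideDel_adj, bbSide_adj] at he
  obtain ⟨⟨hadj, hpT, hqT⟩, hne⟩ := he
  show s(flipEmb p, flipEmb q) ∈ _
  rw [mem_edgeFin, bbSideDel_adj, bbSide_adj]
  refine ⟨⟨?_, hpT, hqT⟩, ?_⟩
  · rcases hadj with ⟨h1, h2⟩ | ⟨h1, h2⟩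
    · exact Or.inl ⟨h1, congrArg Bool.not h2⟩
    · refine Or.inr ⟨h1, ?_⟩
      show ¬ ((!p.2) = (!q.2))
      intro hc
      exact h2 (bool_not_inj _ _ hc)
  · intro hc
    apply hne
    have hcc : (flipEmb (V := V)).sym2Map s(p, q) = s((v, false), (v, true)) := hc
    calc s(p, q) = (flipEmb (V := V)).sym2Map ((flipEmb (V := V)).sym2Map s(p, q)) :=
          (flip_invol _).symm
      _ = (flipEmb (V := V)).sym2Map s((v, false), (v, true)) := by rw [hcc]
      _ = s((v, false), (v, true)) := flip_vedge v

lemma flip_mu [Fintype V] (Fbar : SimpleGraph V) (T : Set V) (v : V)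
    (μ : Sym2 (V × Bool) → ℝ) (hsym : IsSymWeight Fbar μ)
    {e : Sym2 (V × Bool)} (he : e ∈ edgeFin (bbSideDel Fbar T v)) :
    μ ((flipEmb (V := V)).sym2Map e) = μ e := by
  induction e using Sym2.ind with
  | _ p q =>
  rw [mem_edgeFin, bbSideDel_adj, bbSide_adj] at he
  obtain ⟨⟨hadj, hpT, hqT⟩, _⟩ := he
  have hmap : (flipEmb (V := V)).sym2Map s(p, q) = s((p.1, !p.2), (q.1, !q.2)) := rfl
  rcases hadj with ⟨h1, h2⟩ | ⟨h1, h2⟩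
  · -- horizontal edge
    rcases hb : p.2 with _ | _
    · have hq2 : q.2 = false := by rw [← h2, hb]
      have hp' : p = (p.1, false) := Prod.ext rfl hb
      have hq' : q = (q.1, false) := Prod.ext rfl hq2
      rw [hmap, hb, hq2]
      show μ s((p.1, true), (q.1, true)) = μ s(p, q)
      conv_rhs => rw [hp', hq']
      exact (hsym p.1 q.1 h1).symm
    · have hq2 : q.2 = true := by rw [← h2, hb]
      have hp' : p = (p.1, true) := Prod.ext rfl hb
      have hq' : q = (q.1, true) := Prod.ext rfl hq2
      rw [hmap, hb, hq2]
      show μ s((p.1, false), (q.1, false)) = μ s(p, q)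
      conv_rhs => rw [hp', hq']
      exact hsym p.1 q.1 h1
  · -- vertical edge: flip fixes it
    have hq2 : q.2 = !p.2 := by
      have hd : ∀ i j : Bool, i ≠ j → j = !i := by decide
      exact hd _ _ h2
    have hq' : q = (p.1, !p.2) := Prod.ext h1.symm hq2
    subst hq'
    have hfix : (flipEmb (V := V)).sym2Map s(p, (p.1, !p.2)) = s(p, (p.1, !p.2)) := by
      show s((p.1, !p.2), (p.1, !!p.2)) = s(p, (p.1, !p.2))
      rw [Bool.not_not]
      exact Sym2.eq_swap
    rw [hfix]

end Emb

/-! ### More auxiliary lemmas -/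

section Aux2
open SimpleGraph Finset

variable {V : Type*}

lemma EH_erase [Fintype V] [DecidableEq (Sym2 (V × Bool))] (Fbar : SimpleGraph V) (T : Set V) (v : V) (hvT : v ∈ T) :
    edgeFin (bbSide Fbar T) =
      insert s((v, false), (v, true)) (edgeFin (bbSideDel Fbar T v)) ∧
    s((v, false), (v, true)) ∉ edgeFin (bbSideDel Fbar T v) := by
  have hnotmem : s((v, false), (v, true)) ∉ edgeFin (bbSideDel Fbar T v) := by
    rw [mem_edgeFin, bbSideDel_adj]
    rintro ⟨_, hne⟩
    exact hne rfl
  refine ⟨?_, hnotmem⟩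
  ext e
  rw [Finset.mem_insert]
  constructor
  · intro he
    by_cases hev : e = s((v, false), (v, true))
    · exact Or.inl hev
    · right
      induction e using Sym2.ind with
      | _ p q =>
      rw [mem_edgeFin] at he
      rw [mem_edgeFin, bbSideDel_adj]
      exact ⟨he, hev⟩
  · rintro (rfl | he)
    · rw [mem_edgeFin, bbSide_adj]
      exact ⟨Or.inr ⟨rfl, Bool.false_ne_true⟩, hvT, hvT⟩
    · induction e using Sym2.ind with
      | _ p q =>
      rw [mem_edgeFin, bbSideDel_adj] at he
      rw [mem_edgeFin]
      exact he.1

lemma sum_flip [Fintype V] (Fbar : SimpleGraph V) (T : Set V) (v : V)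
    (f : Finset (Sym2 (V × Bool)) → ℝ) :
    ∑ B ∈ (edgeFin (bbSideDel Fbar T v)).powerset, f B =
    ∑ B ∈ (edgeFin (bbSideDel Fbar T v)).powerset,
      f (B.map (flipEmb (V := V)).sym2Map) := by
  have hmapmem : ∀ B ∈ (edgeFin (bbSideDel Fbar T v)).powerset,
      B.map (flipEmb (V := V)).sym2Map ∈ (edgeFin (bbSideDel Fbar T v)).powerset := by
    intro B hB
    rw [Finset.mem_powerset] at hB ⊢
    intro e he
    rw [Finset.mem_map] at he
    obtain ⟨e', he', rfl⟩ := he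
    exact flip_mem_EH Fbar T v (hB he')
  have hinv : ∀ B : Finset (Sym2 (V × Bool)),
      (B.map (flipEmb (V := V)).sym2Map).map (flipEmb (V := V)).sym2Map = B := by
    intro B
    ext e
    rw [Finset.map_map, Finset.mem_map]
    constructor
    · rintro ⟨e', he', rfl⟩
      rw [Function.Embedding.trans_apply, flip_invol]
      exact he'
    · intro he
      exact ⟨e, he, by rw [Function.Embedding.trans_apply, flip_invol]⟩
  refine Finset.sum_nbij' (i := fun B => B.map (flipEmb (V := V)).sym2Map)
    (j := fun B => B.map (flipEmb (V := V)).sym2Map)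
    hmapmem hmapmem (fun B _ => hinv B) (fun B _ => hinv B) ?_
  intro B hB
  rw [hinv B]

lemma sum_zero_vedge {W : Type*} [DecidableEq (Sym2 W)] (μ : Sym2 W → ℝ) (vedge : Sym2 W)
    (EH : Finset (Sym2 W)) (hnv : vedge ∉ EH) (Qr : Finset (Sym2 W) → Prop) :
    (∑ A ∈ (insert vedge EH).powerset,
      ((∏ e ∈ A, (if e = vedge then 0 else μ e)) *
        ∏ e ∈ insert vedge EH \ A, (1 - (if e = vedge then 0 else μ e))) *
        (if Qr A then 1 else 0))
    = ∑ A ∈ EH.powerset,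
        ((∏ e ∈ A, μ e) * ∏ e ∈ EH \ A, (1 - μ e)) * (if Qr A then 1 else 0) := by
  rw [Finset.sum_powerset_insert hnv]
  have hzero : ∀ A ∈ EH.powerset,
      ((∏ e ∈ insert vedge A, (if e = vedge then 0 else μ e)) *
        ∏ e ∈ insert vedge EH \ insert vedge A, (1 - (if e = vedge then 0 else μ e))) *
        (if Qr (insert vedge A) then 1 else 0) = 0 := by
    intro A _
    have : (∏ e ∈ insert vedge A, (if e = vedge then 0 else μ e)) = 0 :=
      Finset.prod_eq_zero (Finset.mem_insert_self vedge A) (if_pos rfl)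
    rw [this]
    ring
  rw [Finset.sum_congr rfl hzero, Finset.sum_const_zero, add_zero]
  refine Finset.sum_congr rfl fun A hA => ?_
  rw [Finset.mem_powerset] at hA
  have hvA : vedge ∉ A := fun h => hnv (hA h)
  have h1 : (∏ e ∈ A, (if e = vedge then 0 else μ e)) = ∏ e ∈ A, μ e := by
    refine Finset.prod_congr rfl fun e he => ?_
    refine if_neg ?_
    intro h
    subst h
    exact hnv (hA he)
  have h2 : insert vedge EH \ A = insert vedge (EH \ A) := by
    ext e
    simp only [Finset.mem_sdiff, Finset.mem_insert]
    constructor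
    · rintro ⟨rfl | he, hna⟩
      · exact Or.inl rfl
      · exact Or.inr ⟨he, hna⟩
    · rintro (rfl | ⟨he, hna⟩)
      · exact ⟨Or.inl rfl, hvA⟩
      · exact ⟨Or.inr he, hna⟩
  have h3 : (∏ e ∈ insert vedge EH \ A, (1 - (if e = vedge then 0 else μ e)))
      = ∏ e ∈ EH \ A, (1 - μ e) := by
    rw [h2, Finset.prod_insert (fun h => hnv (Finset.mem_sdiff.mp h).1), if_pos rfl]
    rw [sub_zero, one_mul]
    refine Finset.prod_congr rfl fun e he => ?_
    have hne : e ≠ vedge := by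
      intro h
      subst h
      exact hnv (Finset.mem_sdiff.mp he).1
    rw [if_neg hne]
  rw [h1, h3]

lemma key_algebra (x0 x1 x01 : ℝ) (e : Prop → Prop → ℝ)
    (he : ∀ Q0 Q1, e Q0 Q1 =
      if Q0 then (if Q1 then x01 else x0) else (if Q1 then x1 else 0))
    (m0 m1 p0 p1 : Prop) :
    e m0 m1 + e p1 p0 - e p0 p1 - e m1 m0 =
      (x0 - x1) * ((if m0 then (1 : ℝ) else 0) - (if m1 then 1 else 0) +
        (if p1 then 1 else 0) - (if p0 then 1 else 0)) := by
  rw [he, he, he, he]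
  by_cases h0 : m0 <;> by_cases h1 : m1 <;> by_cases h2 : p0 <;> by_cases h3 : p1 <;>
    simp [h0, h1, h2, h3] <;> ring

end Aux2

/-! ### Main theorem -/

set_option maxHeartbeats 1600000

/-- Second case: if Ḡ and H̄ satisfy the bunkbed conjecture, x is a vertex of Ḡ and y a
vertex of H̄, then P_{F,μ}(x⁻ ∼ y⁺) ≤ P_{F,μ}(x⁻ ∼ y⁻) for every symmetric weight μ. -/
theorem bunkbed_opposite_sides {V : Type*} [Fintype V]
    (Fbar : SimpleGraph V) (v : V) (S T : Set V)
    (hcut : IsCutVertex Fbar v)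
    (hST : S ∩ T = {v}) (hUnion : S ∪ T = Set.univ)
    (hSep : ∀ x ∈ S, ∀ y ∈ T, Fbar.Adj x y → x = v ∨ y = v)
    (μ : Sym2 (V × Bool) → ℝ) (hμ : IsWeight (BB Fbar) μ) (hsym : IsSymWeight Fbar μ)
    (hG : SatisfiesBunkbed (Fbar.induce S)) (hH : SatisfiesBunkbed (Fbar.induce T))
    (x y : V) (hx : x ∈ S) (hy : y ∈ T) :
    percProb (BB Fbar) μ (fun K => ConnIn K (x, false) (y, true)) ≤
      percProb (BB Fbar) μ (fun K => ConnIn K (x, false) (y, false)) := by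
  obtain ⟨hun, hdisj⟩ := edge_partition Fbar v S T hST hUnion hSep
  have hv : v ∈ S ∩ T := by rw [hST]; rfl
  have hvS : v ∈ S := hv.1
  have hvT : v ∈ T := hv.2
  set EG := edgeFin (bbSide Fbar S) with hEG
  set EH := edgeFin (bbSideDel Fbar T v) with hEHdef
  -- endpoint facts
  have hAend : ∀ A : Finset (Sym2 (V × Bool)), A ⊆ EG →
      ∀ p q : V × Bool, s(p, q) ∈ A → p.1 ∈ S ∧ q.1 ∈ S := by
    intro A hA p q hpq
    have h := hA hpq
    rw [hEG, mem_edgeFin, bbSide_adj] at h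
    exact ⟨h.2.1, h.2.2⟩
  have hBend : ∀ B : Finset (Sym2 (V × Bool)), B ⊆ EH →
      ∀ p q : V × Bool, s(p, q) ∈ B → p.1 ∈ T ∧ q.1 ∈ T := by
    intro B hB p q hpq
    have h := hB hpq
    rw [hEHdef, mem_edgeFin, bbSideDel_adj, bbSide_adj] at h
    exact ⟨h.1.2.1, h.1.2.2⟩
  set wG : Finset (Sym2 (V × Bool)) → ℝ :=
    fun A => (∏ e ∈ A, μ e) * ∏ e ∈ EG \ A, (1 - μ e) with hwG
  set wH : Finset (Sym2 (V × Bool)) → ℝ :=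
    fun B => (∏ e ∈ B, μ e) * ∏ e ∈ EH \ B, (1 - μ e) with hwH
  set X : Prop → Prop → ℝ := fun Q0 Q1 => ∑ A ∈ EG.powerset, wG A *
    (if (ConnIn A (x, false) (v, false) ∧ Q0) ∨ (ConnIn A (x, false) (v, true) ∧ Q1)
     then 1 else 0) with hXdef
  set x0 := ∑ A ∈ EG.powerset, wG A *
    (if ConnIn A (x, false) (v, false) then (1 : ℝ) else 0) with hx0
  set x1 := ∑ A ∈ EG.powerset, wG A *
    (if ConnIn A (x, false) (v, true) then (1 : ℝ) else 0) with hx1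
  set x01 := ∑ A ∈ EG.powerset, wG A *
    (if ConnIn A (x, false) (v, false) ∨ ConnIn A (x, false) (v, true)
     then (1 : ℝ) else 0) with hx01
  have hXeval : ∀ Q0 Q1 : Prop, X Q0 Q1 =
      if Q0 then (if Q1 then x01 else x0) else (if Q1 then x1 else 0) := by
    intro Q0 Q1
    by_cases hQ0 : Q0 <;> by_cases hQ1 : Q1
    · rw [if_pos hQ0, if_pos hQ1, hXdef, hx01]
      refine Finset.sum_congr rfl fun A _ => ?_
      congr 1
      refine if_congr ?_ rfl rfl
      constructor
      · rintro (⟨h, _⟩ | ⟨h, _⟩)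
        exacts [Or.inl h, Or.inr h]
      · rintro (h | h)
        exacts [Or.inl ⟨h, hQ0⟩, Or.inr ⟨h, hQ1⟩]
    · rw [if_pos hQ0, if_neg hQ1, hXdef, hx0]
      refine Finset.sum_congr rfl fun A _ => ?_
      congr 1
      refine if_congr ?_ rfl rfl
      constructor
      · rintro (⟨h, _⟩ | ⟨_, h⟩)
        exacts [h, absurd h hQ1]
      · intro h
        exact Or.inl ⟨h, hQ0⟩
    · rw [if_neg hQ0, if_pos hQ1, hXdef, hx1]
      refine Finset.sum_congr rfl fun A _ => ?_
      congr 1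
      refine if_congr ?_ rfl rfl
      constructor
      · rintro (⟨_, h⟩ | ⟨h, _⟩)
        exacts [absurd h hQ0, h]
      · intro h
        exact Or.inr ⟨h, hQ1⟩
    · rw [if_neg hQ0, if_neg hQ1, hXdef]
      refine Finset.sum_eq_zero fun A _ => ?_
      rw [if_neg ?_, mul_zero]
      rintro (⟨_, h⟩ | ⟨_, h⟩)
      exacts [hQ0 h, hQ1 h]
  -- Step A: the double-sum formula for each level ε
  have hP : ∀ ε : Bool, percProb (BB Fbar) μ (fun K => ConnIn K (x, false) (y, ε)) =
      ∑ B ∈ EH.powerset, wH B *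
        X (ConnIn B (v, false) (y, ε)) (ConnIn B (v, true) (y, ε)) := by
    intro ε
    rw [percProb_split (BB Fbar) μ EG EH hdisj hun, Finset.sum_comm]
    refine Finset.sum_congr rfl fun B hB => ?_
    rw [Finset.mem_powerset] at hB
    rw [hXdef, Finset.mul_sum]
    refine Finset.sum_congr rfl fun A hA => ?_
    rw [Finset.mem_powerset] at hA
    have hconn := conn_decomp hST A B (hAend A hA) (hBend B hB) hx hy ε
    have hiff : (ConnIn (A ∪ B) (x, false) (y, ε)) ↔
        ((ConnIn A (x, false) (v, false) ∧ ConnIn B (v, false) (y, ε)) ∨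
         (ConnIn A (x, false) (v, true) ∧ ConnIn B (v, true) (y, ε))) := by
      rw [hconn]
      exact Bool.exists_bool
    rw [if_congr hiff rfl rfl]
    show wG A * wH B * _ = _
    ring
  -- flip of connectivity events on the H side
  have hflipConn : ∀ (B : Finset (Sym2 (V × Bool))) (a ε : Bool),
      ConnIn (B.map (flipEmb (V := V)).sym2Map) (v, a) (y, ε) ↔
        ConnIn B (v, !a) (y, !ε) := by
    intro B a ε
    have h := connIn_map (flipEmb (V := V)) B (v, !a) (y, !ε)
    have h1 : (flipEmb (V := V)) (v, !a) = (v, a) := by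
      rw [flipEmb_apply]
      show (v, !!a) = (v, a)
      rw [Bool.not_not]
    have h2 : (flipEmb (V := V)) (y, !ε) = (y, ε) := by
      rw [flipEmb_apply]
      show (y, !!ε) = (y, ε)
      rw [Bool.not_not]
    rwa [h1, h2] at h
  -- flip invariance of wH
  have hEHmap : EH.map (flipEmb (V := V)).sym2Map = EH := by
    apply Finset.Subset.antisymm
    · intro e he
      rw [Finset.mem_map] at he
      obtain ⟨e', he', rfl⟩ := he
      exact flip_mem_EH Fbar T v he'
    · intro e he
      rw [Finset.mem_map]
      exact ⟨_, flip_mem_EH Fbar T v he, flip_invol e⟩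
  have hwHflip : ∀ B ∈ EH.powerset, wH (B.map (flipEmb (V := V)).sym2Map) = wH B := by
    intro B hB
    rw [Finset.mem_powerset] at hB
    simp only [hwH]
    rw [Finset.prod_map]
    have h1 : ∏ e ∈ B, μ ((flipEmb (V := V)).sym2Map e) = ∏ e ∈ B, μ e :=
      Finset.prod_congr rfl fun e he => flip_mu Fbar T v μ hsym (hB he)
    have h2 : EH \ B.map (flipEmb (V := V)).sym2Map
        = (EH \ B).map (flipEmb (V := V)).sym2Map := by
      conv_lhs => rw [← hEHmap]
      rw [finsetMapSdiff]
    rw [h1, h2, Finset.prod_map]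
    have h3 : ∏ e ∈ EH \ B, (1 - μ ((flipEmb (V := V)).sym2Map e))
        = ∏ e ∈ EH \ B, (1 - μ e) :=
      Finset.prod_congr rfl fun e he => by
        rw [flip_mu Fbar T v μ hsym (Finset.mem_sdiff.mp he).1]
    rw [h3]
  -- flip reindexing of the main sums
  have hPflip : ∀ ε : Bool,
      (∑ B ∈ EH.powerset, wH B *
        X (ConnIn B (v, false) (y, ε)) (ConnIn B (v, true) (y, ε)))
      = ∑ B ∈ EH.powerset, wH B *
          X (ConnIn B (v, true) (y, !ε)) (ConnIn B (v, false) (y, !ε)) := by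
    intro ε
    rw [sum_flip Fbar T v
      (fun B => wH B * X (ConnIn B (v, false) (y, ε)) (ConnIn B (v, true) (y, ε)))]
    refine Finset.sum_congr rfl fun B hB => ?_
    have hc0 := hflipConn B false ε
    have hc1 := hflipConn B true ε
    rw [Bool.not_false] at hc0
    rw [Bool.not_true] at hc1
    rw [hwHflip B hB, propext hc0, propext hc1]
  -- the M quantities
  set M0 := ∑ B ∈ EH.powerset, wH B *
    (if ConnIn B (v, false) (y, false) then (1 : ℝ) else 0) with hM0
  set M1 := ∑ B ∈ EH.powerset, wH B *
    (if ConnIn B (v, true) (y, false) then (1 : ℝ) else 0) with hM1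
  have hMflip0 : (∑ B ∈ EH.powerset, wH B *
      (if ConnIn B (v, true) (y, true) then (1 : ℝ) else 0)) = M0 := by
    rw [sum_flip Fbar T v
      (fun B => wH B * (if ConnIn B (v, true) (y, true) then (1 : ℝ) else 0)), hM0]
    refine Finset.sum_congr rfl fun B hB => ?_
    have hc := hflipConn B true true
    rw [Bool.not_true] at hc
    rw [hwHflip B hB, if_congr hc rfl rfl]
  have hMflip1 : (∑ B ∈ EH.powerset, wH B *
      (if ConnIn B (v, false) (y, true) then (1 : ℝ) else 0)) = M1 := by
    rw [sum_flip Fbar T v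
      (fun B => wH B * (if ConnIn B (v, false) (y, true) then (1 : ℝ) else 0)), hM1]
    refine Finset.sum_congr rfl fun B hB => ?_
    have hc := hflipConn B false true
    rw [Bool.not_false, Bool.not_true] at hc
    rw [hwHflip B hB, if_congr hc rfl rfl]
  -- the big identity
  have hbig : percProb (BB Fbar) μ (fun K => ConnIn K (x, false) (y, false)) -
      percProb (BB Fbar) μ (fun K => ConnIn K (x, false) (y, true))
      = (x0 - x1) * (M0 - M1) := by
    have e1 := hP false
    have e2 := (hP false).trans (hPflip false)
    have e3 := hP true
    have e4 := (hP true).trans (hPflip true)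
    rw [Bool.not_false] at e2
    rw [Bool.not_true] at e4
    have key : (∑ B ∈ EH.powerset, wH B *
          X (ConnIn B (v, false) (y, false)) (ConnIn B (v, true) (y, false)))
        + (∑ B ∈ EH.powerset, wH B *
          X (ConnIn B (v, true) (y, true)) (ConnIn B (v, false) (y, true)))
        - (∑ B ∈ EH.powerset, wH B *
          X (ConnIn B (v, false) (y, true)) (ConnIn B (v, true) (y, true)))
        - (∑ B ∈ EH.powerset, wH B *
          X (ConnIn B (v, true) (y, false)) (ConnIn B (v, false) (y, false)))
        = (x0 - x1) * ((M0 - M1) + (M0 - M1)) := by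
      rw [← Finset.sum_add_distrib, ← Finset.sum_sub_distrib, ← Finset.sum_sub_distrib]
      have hper : ∀ B ∈ EH.powerset,
          wH B * X (ConnIn B (v, false) (y, false)) (ConnIn B (v, true) (y, false))
          + wH B * X (ConnIn B (v, true) (y, true)) (ConnIn B (v, false) (y, true))
          - wH B * X (ConnIn B (v, false) (y, true)) (ConnIn B (v, true) (y, true))
          - wH B * X (ConnIn B (v, true) (y, false)) (ConnIn B (v, false) (y, false))
          = (x0 - x1) * (wH B *
              ((if ConnIn B (v, false) (y, false) then (1 : ℝ) else 0)
              - (if ConnIn B (v, true) (y, false) then 1 else 0)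
              + (if ConnIn B (v, true) (y, true) then 1 else 0)
              - (if ConnIn B (v, false) (y, true) then 1 else 0))) := by
        intro B _
        have halg := key_algebra x0 x1 x01 X hXeval
          (ConnIn B (v, false) (y, false)) (ConnIn B (v, true) (y, false))
          (ConnIn B (v, false) (y, true)) (ConnIn B (v, true) (y, true))
        calc wH B * X (ConnIn B (v, false) (y, false)) (ConnIn B (v, true) (y, false))
            + wH B * X (ConnIn B (v, true) (y, true)) (ConnIn B (v, false) (y, true))
            - wH B * X (ConnIn B (v, false) (y, true)) (ConnIn B (v, true) (y, true))
            - wH B * X (ConnIn B (v, true) (y, false)) (ConnIn B (v, false) (y, false))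
            = wH B * (X (ConnIn B (v, false) (y, false)) (ConnIn B (v, true) (y, false))
              + X (ConnIn B (v, true) (y, true)) (ConnIn B (v, false) (y, true))
              - X (ConnIn B (v, false) (y, true)) (ConnIn B (v, true) (y, true))
              - X (ConnIn B (v, true) (y, false)) (ConnIn B (v, false) (y, false))) := by
              ring
          _ = _ := by rw [halg]; ring
      rw [Finset.sum_congr rfl hper, ← Finset.mul_sum]
      congr 1
      have hexpand : ∀ B ∈ EH.powerset, wH B *
            ((if ConnIn B (v, false) (y, false) then (1 : ℝ) else 0)
            - (if ConnIn B (v, true) (y, false) then 1 else 0)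
            + (if ConnIn B (v, true) (y, true) then 1 else 0)
            - (if ConnIn B (v, false) (y, true) then 1 else 0))
          = wH B * (if ConnIn B (v, false) (y, false) then (1 : ℝ) else 0)
            - wH B * (if ConnIn B (v, true) (y, false) then 1 else 0)
            + wH B * (if ConnIn B (v, true) (y, true) then 1 else 0)
            - wH B * (if ConnIn B (v, false) (y, true) then 1 else 0) := by
        intro B _
        ring
      rw [Finset.sum_congr rfl hexpand, Finset.sum_sub_distrib, Finset.sum_add_distrib,
        Finset.sum_sub_distrib, hMflip0, hMflip1, ← hM0, ← hM1]
      ring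
    rw [e1, e3]
    have eAB := e1.symm.trans e2
    have eCD := e3.symm.trans e4
    linarith [key, eAB, eCD]
  -- transfer of the bunkbed hypothesis for G
  have hWnu : IsWeight (BB (Fbar.induce S)) (fun e => μ ((sideEmb S).sym2Map e)) := by
    intro e he
    show 0 ≤ μ ((sideEmb S).sym2Map e) ∧ μ ((sideEmb S).sym2Map e) ≤ 1
    apply hμ
    induction e using Sym2.ind with
    | _ p q =>
    rw [SimpleGraph.mem_edgeSet] at he
    show s(sideEmb S p, sideEmb S q) ∈ _
    rw [SimpleGraph.mem_edgeSet]
    exact ((bbInduce_adj Fbar S p q).mp he).1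
  have hSymnu : IsSymWeight (Fbar.induce S) (fun e => μ ((sideEmb S).sym2Map e)) := by
    intro a b hab
    show μ s(((a : V), false), ((b : V), false)) = μ s(((a : V), true), ((b : V), true))
    exact hsym a.1 b.1 hab
  have hGtrans : ∀ a : Bool,
      percProb (BB (Fbar.induce S)) (fun e => μ ((sideEmb S).sym2Map e))
        (fun K => ConnIn K ((⟨x, hx⟩ : S), false) ((⟨v, hvS⟩ : S), a))
      = ∑ A ∈ EG.powerset, wG A *
          (if ConnIn A (x, false) (v, a) then (1 : ℝ) else 0) := by
    intro a
    have htr := percProb_transfer (BB (Fbar.induce S)) (sideEmb S) μ EG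
      (by rw [hEG]; exact edgeFin_corr Fbar S)
      (fun K => ConnIn K ((⟨x, hx⟩ : S), false) ((⟨v, hvS⟩ : S), a))
      (fun A => ConnIn A (x, false) (v, a))
      (fun A _ => (connIn_map (sideEmb S) A ((⟨x, hx⟩ : S), false) ((⟨v, hvS⟩ : S), a)).symm)
    rw [htr]
  have hx1x0 : x1 ≤ x0 := by
    have hmono := hG (fun e => μ ((sideEmb S).sym2Map e)) hWnu hSymnu ⟨x, hx⟩ ⟨v, hvS⟩
    rw [hGtrans true, hGtrans false] at hmono
    rw [hx0, hx1]
    exact hmono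
  -- transfer of the bunkbed hypothesis for H
  set μ' : Sym2 (V × Bool) → ℝ :=
    fun e => if e = s((v, false), (v, true)) then 0 else μ e with hmu'def
  have hWnu' : IsWeight (BB (Fbar.induce T)) (fun e => μ' ((sideEmb T).sym2Map e)) := by
    intro e he
    show 0 ≤ μ' ((sideEmb T).sym2Map e) ∧ μ' ((sideEmb T).sym2Map e) ≤ 1
    simp only [hmu'def]
    by_cases hev : (sideEmb T).sym2Map e = s((v, false), (v, true))
    · rw [if_pos hev]
      exact ⟨le_refl 0, zero_le_one⟩
    · rw [if_neg hev]
      apply hμ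
      induction e using Sym2.ind with
      | _ p q =>
      rw [SimpleGraph.mem_edgeSet] at he
      show s(sideEmb T p, sideEmb T q) ∈ _
      rw [SimpleGraph.mem_edgeSet]
      exact ((bbInduce_adj Fbar T p q).mp he).1
  have hSymnu' : IsSymWeight (Fbar.induce T) (fun e => μ' ((sideEmb T).sym2Map e)) := by
    intro a b hab
    show μ' s(((a : V), false), ((b : V), false)) = μ' s(((a : V), true), ((b : V), true))
    have h1 : s((((a : V) : V), false), (((b : V) : V), false)) ≠ s((v, false), (v, true)) := by
      intro h
      rw [Sym2.eq_iff] at h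
      rcases h with ⟨h1, h2⟩ | ⟨h1, h2⟩
      · exact Bool.false_ne_true (congrArg Prod.snd h2)
      · exact Bool.false_ne_true (congrArg Prod.snd h1)
    have h2 : s((((a : V) : V), true), (((b : V) : V), true)) ≠ s((v, false), (v, true)) := by
      intro h
      rw [Sym2.eq_iff] at h
      rcases h with ⟨h1, h2⟩ | ⟨h1, h2⟩
      · exact Bool.noConfusion (congrArg Prod.snd h1)
      · exact Bool.noConfusion (congrArg Prod.snd h2)
    simp only [hmu'def]
    rw [if_neg h1, if_neg h2]
    exact hsym a.1 b.1 hab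
  have hHtrans : ∀ a : Bool,
      percProb (BB (Fbar.induce T)) (fun e => μ' ((sideEmb T).sym2Map e))
        (fun K => ConnIn K ((⟨y, hy⟩ : T), false) ((⟨v, hvT⟩ : T), a))
      = ∑ B ∈ EH.powerset, wH B *
          (if ConnIn B (y, false) (v, a) then (1 : ℝ) else 0) := by
    intro a
    obtain ⟨hins, hnv⟩ := EH_erase Fbar T v hvT
    have htr := percProb_transfer (BB (Fbar.induce T)) (sideEmb T) μ'
      (edgeFin (bbSide Fbar T)) (edgeFin_corr Fbar T)
      (fun K => ConnIn K ((⟨y, hy⟩ : T), false) ((⟨v, hvT⟩ : T), a))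
      (fun B => ConnIn B (y, false) (v, a))
      (fun B _ => (connIn_map (sideEmb T) B ((⟨y, hy⟩ : T), false) ((⟨v, hvT⟩ : T), a)).symm)
    rw [htr, hins, ← hEHdef]
    have hz := sum_zero_vedge μ s((v, false), (v, true)) EH hnv
      (fun B => ConnIn B (y, false) (v, a))
    simp only [hmu'def]
    rw [hz]
  have hM1M0 : M1 ≤ M0 := by
    have hmono := hH (fun e => μ' ((sideEmb T).sym2Map e)) hWnu' hSymnu' ⟨y, hy⟩ ⟨v, hvT⟩
    rw [hHtrans true, hHtrans false] at hmono
    have hc0 : (∑ B ∈ EH.powerset, wH B *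
        (if ConnIn B (y, false) (v, false) then (1 : ℝ) else 0)) = M0 := by
      rw [hM0]
      exact Finset.sum_congr rfl fun B _ => by rw [if_congr connIn_comm rfl rfl]
    have hc1 : (∑ B ∈ EH.powerset, wH B *
        (if ConnIn B (y, false) (v, true) then (1 : ℝ) else 0)) = M1 := by
      rw [hM1]
      exact Finset.sum_congr rfl fun B _ => by rw [if_congr connIn_comm rfl rfl]
    rw [hc0, hc1] at hmono
    exact hmono
  have hfx : 0 ≤ (x0 - x1) * (M0 - M1) :=
    mul_nonneg (by linarith) (by linarith)
  linarith [hbig, hfx]
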